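/- arXiv:2211.16494 — 6 statements merged into one kernel-verified Lean document; each statement's English description precedes it below -/
import Mathlib

section
/- For f : (R^{D_x})^N → R, M template vectors v^{(1)},...,v^{(M)} ∈ R^{D_x}, and the grid tensor B(f) ∈ R^{M×···×M} defined by B(f)_{d_1,...,d_N} = f(v^{(d_1)},...,v^{(d_N)}), it holds for any I ⊆ [N] that the rank of the matricization of B(f) with respect to I is at most the separation rank of f with respect to I. -/
/-!
A representation `f X = ∑ r, g r (X_I) * g' r (X_{Iᶜ})` with `R` summands, evaluated on the grid,
factors the matricization of the grid tensor as a product of a matrix with `R` columns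
(entries `g r (v ∘ a)`) and one with `R` rows (entries `g' r (v ∘ b)`), so its rank is at most `R`.
-/

/-- A representation of `f` as a sum of `R` products of functions of the
variables indexed by `I` and of the remaining variables. -/
def SepRep {N Dx : ℕ} (f : (Fin N → (Fin Dx → ℝ)) → ℝ) (I : Finset (Fin N)) (R : ℕ) : Prop :=
  ∃ (g : Fin R → ({i : Fin N // i ∈ I} → (Fin Dx → ℝ)) → ℝ)
    (g' : Fin R → ({j : Fin N // j ∉ I} → (Fin Dx → ℝ)) → ℝ),
    ∀ X : Fin N → (Fin Dx → ℝ),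
      f X = ∑ r : Fin R, g r (fun i => X i.1) * g' r (fun j => X j.1)

/-- The separation rank of `f` with respect to `I`: minimal number of summands
(`0` if `f ≡ 0`, `⊤` if no finite representation exists). -/
noncomputable def sepRank {N Dx : ℕ} (f : (Fin N → (Fin Dx → ℝ)) → ℝ)
    (I : Finset (Fin N)) : ℕ∞ :=
  sInf {n : ℕ∞ | ∃ R : ℕ, n = (R : ℕ∞) ∧ SepRep f I R}

open Matrix

def gridMatricization {N Dx M : ℕ} (f : (Fin N → (Fin Dx → ℝ)) → ℝ) (v : Fin M → (Fin Dx → ℝ))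
    (I : Finset (Fin N)) :
    Matrix ({i : Fin N // i ∈ I} → Fin M) ({j : Fin N // j ∉ I} → Fin M) ℝ :=
  Matrix.of fun a b => f (fun i => v (if h : i ∈ I then a ⟨i, h⟩ else b ⟨i, h⟩))

theorem gridMatricization_eq_mul_of_eq_sum {N Dx M R : ℕ} {f : (Fin N → (Fin Dx → ℝ)) → ℝ}
    {I : Finset (Fin N)} (v : Fin M → (Fin Dx → ℝ))
    (g : Fin R → ({i : Fin N // i ∈ I} → (Fin Dx → ℝ)) → ℝ)
    (g' : Fin R → ({j : Fin N // j ∉ I} → (Fin Dx → ℝ)) → ℝ)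
    (hrep : ∀ X : Fin N → (Fin Dx → ℝ),
      f X = ∑ r : Fin R, g r (fun i => X i.1) * g' r (fun j => X j.1)) :
    gridMatricization f v I =
      Matrix.of (fun a r => g r (fun i => v (a i))) *
        Matrix.of (fun r b => g' r (fun j => v (b j))) := by
  ext a b
  simp only [gridMatricization, mul_apply, of_apply, hrep]
  refine Finset.sum_congr rfl fun r _ => ?_
  congr 3 <;> funext i
  · simp [i.2]
  · simp [i.2]

theorem SepRep.rank_gridMatricization_le {N Dx M R : ℕ} {f : (Fin N → (Fin Dx → ℝ)) → ℝ}
    {I : Finset (Fin N)} (hf : SepRep f I R) (v : Fin M → (Fin Dx → ℝ)) :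
    (gridMatricization f v I).rank ≤ R := by
  obtain ⟨g, g', hrep⟩ := hf
  rw [gridMatricization_eq_mul_of_eq_sum v g g' hrep]
  exact (rank_mul_le_left _ _).trans ((rank_le_card_width _).trans_eq (Fintype.card_fin R))

/-- The rank of the matricization (with respect to `I`) of the grid tensor of
`f` over template vectors `v` lower bounds the separation rank of `f`. -/
theorem gridTensor_matricization_rank_le_sepRank {N Dx M : ℕ}
    (f : (Fin N → (Fin Dx → ℝ)) → ℝ) (v : Fin M → (Fin Dx → ℝ))
    (I : Finset (Fin N)) :
    ((Matrix.of fun (a : {i : Fin N // i ∈ I} → Fin M)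
        (b : {j : Fin N // j ∉ I} → Fin M) =>
        f (fun i => v (if h : i ∈ I then a ⟨i, h⟩ else b ⟨i, h⟩))).rank : ℕ∞)
      ≤ sepRank f I := by
  apply le_sInf
  rintro _ ⟨R, rfl, hR⟩
  exact_mod_cast hR.rank_gridMatricization_le v
end

section
/- For any D ∈ N and P ∈ N_{≥0}, there exists a matrix Z ∈ R^{M×D} with strictly positive entries, where M = C(D+P-1, P), such that the P-th entrywise (Hadamard) power of the Gram matrix Z Z^T has full rank M. -/
/-!
Take as rows of `Z` the vectors `(u ^ k j)_j`, one for each exponent vector `k` of total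
degree `P`. By the multinomial theorem the `P`-th Hadamard power of `Z Zᵀ` factors as `V C Vᵀ`,
with `V = (u ^ ⟪k, l⟫)_{k,l}` and `C` the diagonal of multinomial coefficients. As a polynomial
in `u`, `det V` has leading term `u ^ ∑ ⟪k, k⟫` coming from the identity permutation
alone, since every other permutation `π` has `∑ ⟪π k, k⟫ < ∑ ⟪k, k⟫`; so some `u > 0`
makes `V` invertible.
-/

open Matrix Polynomial Finset

theorem Finset.card_piAntidiag_univ {σ : Type*} [Fintype σ] [DecidableEq σ] (P : ℕ) :
    #(piAntidiag (univ : Finset σ) P) = (Fintype.card σ + P - 1).choose P := by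
  rw [← map_sym_eq_piAntidiag, card_map, sym_univ, card_univ, Sym.card_sym_eq_choose]

section Monomials

variable {ι σ κ R : Type*} [Fintype σ] [CommSemiring R]

def monomialMatrix (Z : Matrix ι σ R) (v : κ → σ → ℕ) : Matrix ι κ R :=
  of fun m i => ∏ j, Z m j ^ v i j

theorem monomialMatrix_of_pow (u : R) (w : ι → σ → ℕ) (v : κ → σ → ℕ) :
    monomialMatrix (of fun m j => u ^ w m j) v = of fun m i => u ^ (w m ⬝ᵥ v i) := by
  ext m i
  simp only [monomialMatrix, of_apply, dotProduct, ← pow_mul, prod_pow_eq_pow_sum]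

theorem hadamardPow_mul_transpose_eq [DecidableEq σ] [Fintype κ] [DecidableEq κ]
    (Z : Matrix ι σ R) (P : ℕ) (e : κ ≃ piAntidiag (univ : Finset σ) P) :
    of (fun m n => ((Z * Zᵀ) m n) ^ P) =
      monomialMatrix Z (fun i => e i) *
        diagonal (fun i => (Nat.multinomial univ (e i : σ → ℕ) : R)) *
        (monomialMatrix Z (fun i => e i))ᵀ := by
  ext m n
  rw [mul_apply (M := monomialMatrix Z _ * _)]
  simp only [mul_diagonal]
  simp only [of_apply, mul_apply, transpose_apply, sum_pow_eq_sum_piAntidiag,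
    ← sum_coe_sort (piAntidiag univ P), ← e.sum_comp, monomialMatrix, mul_pow, prod_mul_distrib]
  exact sum_congr rfl fun i _ => by ring

end Monomials

section ExponentGram

variable {κ σ : Type*} [Fintype κ] [DecidableEq κ] [Fintype σ]

theorem sum_dotProduct_perm_lt {v : κ → σ → ℕ} (hv : Function.Injective v)
    {π : Equiv.Perm κ} (hπ : π ≠ 1) :
    ∑ m, v (π m) ⬝ᵥ v m < ∑ m, v m ⬝ᵥ v m := by
  obtain ⟨m₀, hm₀⟩ : ∃ m, π m ≠ m := by
    by_contra! h
    exact hπ (Equiv.ext h)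
  obtain ⟨j₀, hj₀⟩ := Function.ne_iff.mp (hv.ne hm₀)
  -- `∑ₘ ‖v (π m) - v m‖² > 0` expands to twice the claimed gap.
  have hpos : 0 < ∑ m, ∑ j, ((v (π m) j : ℤ) - v m j) ^ 2 :=
    sum_pos' (fun m _ => sum_nonneg fun j _ => sq_nonneg _) ⟨m₀, mem_univ _,
      sum_pos' (fun j _ => sq_nonneg _) ⟨j₀, mem_univ _, by
        have : (v (π m₀) j₀ : ℤ) - v m₀ j₀ ≠ 0 := sub_ne_zero.mpr (mod_cast hj₀)
        positivity⟩⟩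
  have hsq := Equiv.sum_comp π fun m => ∑ j, (v m j : ℤ) ^ 2
  simp only [sub_sq, sum_add_distrib, sum_sub_distrib, hsq, mul_assoc, ← mul_sum] at hpos
  zify
  push_cast [dotProduct]
  simp only [← sq]
  linarith

theorem det_X_pow_dotProduct_ne_zero (R : Type*) [CommRing R] [Nontrivial R]
    {v : κ → σ → ℕ} (hv : Function.Injective v) :
    (of fun m n => (X : R[X]) ^ (v m ⬝ᵥ v n)).det ≠ 0 := by
  have hcoeff :
      (of fun m n => (X : R[X]) ^ (v m ⬝ᵥ v n)).det.coeff (∑ m, v m ⬝ᵥ v m) = 1 := by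
    rw [det_apply, finsetSum_coeff, sum_eq_single 1]
    · simp [prod_pow_eq_pow_sum]
    · intro π _ hπ
      rw [coeff_smul]
      simp only [of_apply, prod_pow_eq_pow_sum, coeff_X_pow,
        if_neg (sum_dotProduct_perm_lt hv hπ).ne', smul_zero]
    · simp
  intro h
  simp [h] at hcoeff

theorem exists_pos_det_pow_dotProduct_ne_zero (K : Type*) [Field K] [LinearOrder K]
    [IsStrictOrderedRing K] {v : κ → σ → ℕ} (hv : Function.Injective v) :
    ∃ u : K, 0 < u ∧ (of fun m n => u ^ (v m ⬝ᵥ v n)).det ≠ 0 := by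
  obtain ⟨u, hu, hroot⟩ := ((Set.Ioi_infinite (0 : K)).sdiff
    (finite_setOfPred_isRoot (det_X_pow_dotProduct_ne_zero K hv))).nonempty
  refine ⟨u, hu, ?_⟩
  have heval : (of fun m n => u ^ (v m ⬝ᵥ v n)) =
      (evalRingHom u).mapMatrix (of fun m n => (X : K[X]) ^ (v m ⬝ᵥ v n)) := by
    ext m n
    simp
  rw [heval, ← RingHom.map_det]
  exact hroot

end ExponentGram

theorem exists_pos_matrix_hadamard_power_full_rank_general (D P : ℕ) :
    ∃ Z : Matrix (Fin ((D + P - 1).choose P)) (Fin D) ℝ,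
      (∀ m n, 0 < Z m n) ∧
      (Matrix.of fun m n => ((Z * Zᵀ) m n) ^ P).rank = (D + P - 1).choose P := by
  set M := (D + P - 1).choose P
  let e : Fin M ≃ piAntidiag (univ : Finset (Fin D)) P := (Fintype.equivFinOfCardEq <| by
    rw [Fintype.card_coe, card_piAntidiag_univ, Fintype.card_fin]).symm
  let v : Fin M → Fin D → ℕ := fun m => e m
  obtain ⟨u, hu, hdet⟩ :=
    exists_pos_det_pow_dotProduct_ne_zero ℝ (v := v) fun _ _ h => e.injective (Subtype.ext h)
  refine ⟨of fun m j => u ^ v m j, fun m j => pow_pos hu _, ?_⟩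
  rw [hadamardPow_mul_transpose_eq _ P e, monomialMatrix_of_pow]
  refine (rank_of_isUnit _ ?_).trans (Fintype.card_fin M)
  rw [isUnit_iff_isUnit_det, det_mul, det_mul, det_transpose, det_diagonal, isUnit_iff_ne_zero]
  have hmult : ∏ i, (Nat.multinomial univ (v i) : ℝ) ≠ 0 :=
    prod_ne_zero_iff.mpr fun i _ => Nat.cast_ne_zero.mpr (Nat.multinomial_pos _ _).ne'
  exact mul_ne_zero (mul_ne_zero hdet hmult) hdet

/-- For any `D ∈ ℕ` and `P ∈ ℕ≥0`, there exists a matrix `Z` with strictly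
positive entries, with `M = C(D + P - 1, P)` rows and `D` columns, such that
the `P`-th Hadamard power of the Gram matrix `Z Zᵀ` has full rank `M`. -/
theorem exists_pos_matrix_hadamard_power_full_rank (D P : ℕ) (hD : 1 ≤ D) :
    ∃ Z : Matrix (Fin ((D + P - 1).choose P)) (Fin D) ℝ,
      (∀ m n, 0 < Z m n) ∧
      (Matrix.of fun m n => ((Z * Zᵀ) m n) ^ P).rank = (D + P - 1).choose P :=
  exists_pos_matrix_hadamard_power_full_rank_general D P
end

section
/- The rank of the P-th Hadamard power of any matrix of rank at most D is at most the multiset coefficient C(D+P-1, P). -/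
/-!
Factor `A = X * Y` through `Fin r` with `r = rank A`. By the multinomial theorem,
`(∑ d, X i d * Y d j) ^ P = ∑ μ, c μ * X i ^ μ * Y j ^ μ`, the sum running over the multisets
`μ` of size `P` on `Fin r` and `c μ` counting the words with content `μ`. So the Hadamard power
factors through the `C(r + P - 1, P)` such multisets.
-/

namespace Matrix

variable {m n ι : Type*} [Fintype ι]

theorem exists_mul_eq_of_rank {K : Type*} [Field K] [Fintype n] (A : Matrix m n K) :
    ∃ (X : Matrix m (Fin A.rank) K) (Y : Matrix (Fin A.rank) n K), X * Y = A := by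
  let W := Submodule.span K (Set.range Aᵀ)
  have : Module.Finite K W := Module.Finite.span_of_finite K (Set.finite_range _)
  let b : Module.Basis (Fin A.rank) K W :=
    Module.finBasisOfFinrankEq K W A.rank_eq_finrank_span_cols.symm
  let col (j : n) : W := ⟨Aᵀ j, Submodule.subset_span ⟨j, rfl⟩⟩
  refine ⟨of fun i d => (b d : m → K) i, of fun d j => b.repr (col j) d, ?_⟩
  ext i j
  change _ = ((col j : W) : m → K) i
  rw [← congr_arg (fun w : W => (w : m → K) i) (b.sum_repr (col j))]
  simp only [mul_apply, of_apply, Submodule.coe_sum, Finset.sum_apply, Submodule.coe_smul,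
    Pi.smul_apply, smul_eq_mul, mul_comm]

def symMonomials {R : Type*} [CommSemiring R] (X : Matrix m ι R) (P : ℕ) :
    Matrix m (Sym ι P) R :=
  of fun i μ => ((μ : Multiset ι).map (X i)).prod

variable {R : Type*} [CommSemiring R] [DecidableEq ι]

theorem map_pow_mul_eq (X : Matrix m ι R) (Y : Matrix ι n R) (P : ℕ) :
    (X * Y).map (· ^ P) =
      symMonomials X P * diagonal (fun μ : Sym ι P => ((μ : Multiset ι).countPerms : R)) *
        (symMonomials Yᵀ P)ᵀ := by
  ext i j
  rw [map_apply, mul_apply, Finset.sum_pow, Finset.sym_univ, mul_apply]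
  refine Fintype.sum_congr _ _ fun μ => ?_
  rw [mul_diagonal, transpose_apply, symMonomials, symMonomials, of_apply, of_apply,
    Multiset.prod_map_mul, mul_left_comm, ← mul_assoc]
  rfl

theorem rank_map_pow_mul_le [StrongRankCondition R] [Fintype n] (X : Matrix m ι R)
    (Y : Matrix ι n R) (P : ℕ) :
    ((X * Y).map (· ^ P)).rank ≤ (Fintype.card ι + P - 1).choose P := by
  rw [map_pow_mul_eq, ← Sym.card_sym_eq_choose]
  exact (rank_mul_le_left _ _).trans (rank_le_card_width _)

end Matrix

theorem rank_hadamard_power_le_general {m n : Type*} [Fintype n] (A : Matrix m n ℝ) (D P : ℕ)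
    (hA : A.rank ≤ D) :
    (Matrix.of fun i j => (A i j) ^ P).rank ≤ (D + P - 1).choose P := by
  obtain ⟨X, Y, hXY⟩ := A.exists_mul_eq_of_rank
  rw [← hXY]
  refine (Matrix.rank_map_pow_mul_le X Y P).trans (Nat.choose_le_choose P ?_)
  rw [Fintype.card_fin]
  omega

/-- The rank of the `P`-th Hadamard power of a matrix of rank at most `D` is at
most the multiset coefficient `C(D + P - 1, P)`. -/
theorem rank_hadamard_power_le {m n : Type*} [Fintype m] [Fintype n]
    [DecidableEq m] [DecidableEq n] (A : Matrix m n ℝ) (D P : ℕ)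
    (hA : A.rank ≤ D) :
    (Matrix.of fun i j => (A i j) ^ P).rank ≤ (D + P - 1).choose P :=
  rank_hadamard_power_le_general A D P hA
end

section
/- In an undirected graph G = (V, E) where every vertex has a self-loop, for any subset C ⊆ V of vertices each having at least one neighbor other than itself, the number of walks of length l from C to V satisfies ρ_l(C, V) ≤ (1/2)·ρ_{l+2}(C, V) for every l ∈ N_{≥0}. -/
/-- The number of length-`l` walks in the graph `G` whose first vertex lies in
`C` and whose last vertex lies in `T`. -/
noncomputable def walkCount {V : Type*} (G : V → V → Prop) (C T : Set V) (l : ℕ) : ℕ :=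
  Nat.card {w : Fin (l + 1) → V //
    (∀ k : Fin l, G (w k.castSucc) (w k.succ)) ∧ w 0 ∈ C ∧ w (Fin.last l) ∈ T}

/-!
Prepending a back-and-forth step `w 0 → v → w 0` to a walk `w` gives a walk two steps longer
with the same endpoints, and the walk together with `v` can be read back off the result. Every
vertex `i` of `C` offers two choices of `v`: the loop `v = i` and a neighbour `v ≠ i`. So the
walks of length `l + 2` from `C` contain two disjoint copies of the walks of length `l`.
-/

section

variable {V : Type*} (G : V → V → Prop)

def IsFinWalk {l : ℕ} (w : Fin (l + 1) → V) : Prop :=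
  ∀ k : Fin l, G (w k.castSucc) (w k.succ)

variable {G}

lemma isFinWalk_cons {l : ℕ} {a : V} {w : Fin (l + 1) → V} :
    IsFinWalk G (Fin.cons a w : Fin (l + 2) → V) ↔ G a (w 0) ∧ IsFinWalk G w := by
  simp only [IsFinWalk, Fin.forall_fin_succ, Fin.castSucc_zero, Fin.cons_zero, Fin.cons_succ,
    ← Fin.succ_castSucc]

variable (G) in
abbrev FinWalks (C T : Set V) (l : ℕ) : Type _ :=
  {w : Fin (l + 1) → V // IsFinWalk G w ∧ w 0 ∈ C ∧ w (Fin.last l) ∈ T}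

variable {C T : Set V} {l : ℕ}

def FinWalks.detour (w : FinWalks G C T l) (v : V) (hto : G (w.1 0) v) (hback : G v (w.1 0)) :
    FinWalks G C T (l + 2) :=
  ⟨Fin.cons (w.1 0) (Fin.cons v w.1),
    isFinWalk_cons.2 ⟨hto, isFinWalk_cons.2 ⟨hback, w.2.1⟩⟩, w.2.2.1, by simpa using w.2.2.2⟩

lemma FinWalks.detour_inj {w w' : FinWalks G C T l} {v v' : V} {hto hback hto' hback'} :
    w.detour v hto hback = w'.detour v' hto' hback' ↔ w = w' ∧ v = v' := by
  simp only [FinWalks.detour, Subtype.ext_iff, Fin.cons_inj]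
  exact ⟨fun ⟨_, hv, hw⟩ => ⟨hw, hv⟩, fun ⟨hw, hv⟩ => ⟨congrFun hw 0, hv, hw⟩⟩

theorem two_mul_walkCount_le [Finite V] (hloop : ∀ i ∈ C, G i i)
    (hC : ∀ i ∈ C, ∃ j, j ≠ i ∧ G i j ∧ G j i) (T : Set V) (l : ℕ) :
    2 * walkCount G C T l ≤ walkCount G C T (l + 2) := by
  choose nbr hnbr_ne hto hback using hC
  let f : FinWalks G C T l × Bool → FinWalks G C T (l + 2)
    | (w, true) => w.detour (w.1 0) (hloop _ w.2.2.1) (hloop _ w.2.2.1)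
    | (w, false) => w.detour (nbr _ w.2.2.1) (hto _ w.2.2.1) (hback _ w.2.2.1)
  have hf : Function.Injective f := by
    rintro ⟨w, _ | _⟩ ⟨w', _ | _⟩ h <;> obtain ⟨rfl, hv⟩ := FinWalks.detour_inj.1 h
    · rfl
    · exact (hnbr_ne _ _ hv).elim
    · exact (hnbr_ne _ _ hv.symm).elim
    · rfl
  have := Nat.card_le_card_of_injective f hf
  rwa [Nat.card_prod, Nat.card_eq_fintype_card (α := Bool), Fintype.card_bool, mul_comm] at this

end

/-- In an undirected graph with all self-loops, for a set `C` of vertices each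
having a neighbor other than itself, the number of length-`l` walks from `C`
satisfies `ρ_l(C, V) ≤ (1/2) · ρ_{l+2}(C, V)`. -/
theorem walkCount_le_half_walkCount_add_two {V : Type*} [Fintype V]
    (G : V → V → Prop) (hsymm : ∀ i j, G i j → G j i) (hloop : ∀ i, G i i)
    (C : Set V) (hC : ∀ i ∈ C, ∃ j, j ≠ i ∧ G i j) (l : ℕ) :
    (walkCount G C Set.univ l : ℝ)
      ≤ (1 / 2) * (walkCount G C Set.univ (l + 2) : ℝ) := by
  have hCback : ∀ i ∈ C, ∃ j, j ≠ i ∧ G i j ∧ G j i := fun i hi =>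
    (hC i hi).imp fun j ⟨hne, hij⟩ => ⟨hne, hij, hsymm i j hij⟩
  have hcount : (2 * walkCount G C Set.univ l : ℝ) ≤ walkCount G C Set.univ (l + 2) := by
    exact_mod_cast two_mul_walkCount_le (fun i _ => hloop i) hCback Set.univ l
  linarith
end

section
/- In an undirected graph with all self-loops, for a target vertex t and a set C of vertices each having at least one neighbor besides itself, the number of length-l walks from C ending at t satisfies ρ_l(C,{t}) ≤ ρ_{l+1}(C,{t}) and ρ_l(C,{t}) ≤ (1/2)·ρ_{l+2}(C,{t}) for all l ∈ N_{≥0}, and consequently Σ_{l=1}^{L} ρ_{L-l}(C,{t}) ≤ 4·ρ_{L-1}(C,{t}) for any L ∈ N. -/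
/-!
Prepending a vertex to a walk from `C` to `T` turns it into a longer walk from `C` to `T`.
Repeating the first vertex (a self-loop) shows `ρ_l ≤ ρ_{l+1}`; inserting the detour
`i₀ → x → i₀` where `x` is either `i₀` itself or a fixed neighbour `x ≠ i₀` shows
`2 ρ_l ≤ ρ_{l+2}`. Summing, the walks of lengths `L - 1, L - 3, …` and of lengths
`L - 2, L - 4, …` each contribute at most `2 ρ_{L-1}` by comparison with a geometric series.
-/

open Finset Matrix

abbrev Walks {V : Type*} (G : V → V → Prop) (C T : Set V) (l : ℕ) : Type _ :=
  {w : Fin (l + 1) → V //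
    (∀ k : Fin l, G (w k.castSucc) (w k.succ)) ∧ w 0 ∈ C ∧ w (Fin.last l) ∈ T}

namespace Walks

variable {V : Type*} {G : V → V → Prop} {C C' T : Set V} {l : ℕ}

def cons (w : Walks G C T l) (x : V) (hx : G x (w.1 0)) (hxC' : x ∈ C') :
    Walks G C' T (l + 1) :=
  ⟨vecCons x w.1, fun k => by
    induction k using Fin.cases with
    | zero => simpa using hx
    | succ k => simpa [← Fin.succ_castSucc] using w.2.1 k,
   hxC', by simpa [← Fin.succ_last] using w.2.2.2⟩

theorem cons_inj {w w' : Walks G C T l} {x x' : V} {hx : G x (w.1 0)} {hx' : G x' (w'.1 0)}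
    {hC : x ∈ C'} {hC' : x' ∈ C'} :
    w.cons x hx hC = w'.cons x' hx' hC' ↔ x = x' ∧ w = w' := by
  simp [cons, Subtype.ext_iff, vecCons_inj]

end Walks

section Monotonicity

variable {V : Type*} [Finite V] {G : V → V → Prop} {C T : Set V}

theorem walkCount_le_walkCount_succ (hloop : ∀ i, G i i) (l : ℕ) :
    walkCount G C T l ≤ walkCount G C T (l + 1) :=
  Nat.card_le_card_of_injective (fun w : Walks G C T l => w.cons (w.1 0) (hloop _) w.2.2.1)
    fun _ _ h => (Walks.cons_inj.mp h).2

theorem two_mul_walkCount_le_walkCount_add_two (hsymm : ∀ i j, G i j → G j i)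
    (hloop : ∀ i, G i i) (hC : ∀ i ∈ C, ∃ j, j ≠ i ∧ G i j) (l : ℕ) :
    2 * walkCount G C T l ≤ walkCount G C T (l + 2) := by
  classical
  choose! nbr hnbr using hC
  let mid : Bool → Walks G C T l → V := fun b w => if b then w.1 0 else nbr (w.1 0)
  have hmid : ∀ b w, G (w.1 0) (mid b w) := by
    rintro (_ | _) w
    · exact (hnbr _ w.2.2.1).2
    · exact hloop _
  let detour (p : Bool × Walks G C T l) : Walks G C T (l + 2) :=
    (p.2.cons (mid p.1 p.2) (hsymm _ _ (hmid p.1 p.2)) (Set.mem_univ _)).cons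
      (p.2.1 0) (hmid p.1 p.2) p.2.2.2.1
  have hdetour : Function.Injective detour := by
    rintro ⟨b, w⟩ ⟨b', w'⟩ h
    obtain ⟨-, h⟩ := Walks.cons_inj.mp h
    obtain ⟨hmid_eq, rfl⟩ := Walks.cons_inj.mp h
    have hne := (hnbr _ w.2.2.1).1
    cases b <;> cases b' <;>
      first | rfl | exact absurd hmid_eq hne | exact absurd hmid_eq.symm hne
  calc 2 * walkCount G C T l = Nat.card (Bool × Walks G C T l) := by
        rw [Nat.card_prod, Nat.card_eq_fintype_card (α := Bool), Fintype.card_bool]; rfl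
    _ ≤ walkCount G C T (l + 2) := Nat.card_le_card_of_injective detour hdetour

end Monotonicity

section Sequences

variable {ρ : ℕ → ℕ}

theorem sum_range_add_two_le (h : ∀ n, 2 * ρ n ≤ ρ (n + 2)) (n : ℕ) :
    ∑ m ∈ range (n + 2), ρ m ≤ 2 * ρ (n + 1) + 2 * ρ n := by
  induction n with
  | zero => simp only [zero_add, sum_range_succ, sum_range_zero]; omega
  | succ n ih =>
    calc ∑ m ∈ range (n + 3), ρ m = ∑ m ∈ range (n + 2), ρ m + ρ (n + 2) := sum_range_succ _ _
      _ ≤ 2 * ρ (n + 1) + 2 * ρ n + ρ (n + 2) := by gcongr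
      _ ≤ 2 * ρ (n + 2) + 2 * ρ (n + 1) := by have := h n; omega

theorem sum_range_succ_le_four_mul (hmono : Monotone ρ) (h : ∀ n, 2 * ρ n ≤ ρ (n + 2))
    (n : ℕ) : ∑ m ∈ range (n + 1), ρ m ≤ 4 * ρ n := by
  cases n with
  | zero => simp only [zero_add, sum_range_one]; omega
  | succ n =>
    calc ∑ m ∈ range (n + 2), ρ m ≤ 2 * ρ (n + 1) + 2 * ρ n := sum_range_add_two_le h n
      _ ≤ 4 * ρ (n + 1) := by have := hmono (n.le_add_right 1); omega

end Sequences

theorem sum_Icc_sub_eq_sum_range {M : Type*} [AddCommMonoid M] (f : ℕ → M) (L : ℕ) :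
    ∑ l ∈ Icc 1 L, f (L - l) = ∑ m ∈ range L, f m := by
  rw [← Ico_add_one_right_eq_Icc, sum_Ico_reflect _ _ le_rfl]
  simp

/-- In an undirected graph with all self-loops, for a target vertex `t` and a
set `C` of vertices each having a neighbor other than itself:
`ρ_l(C,{t}) ≤ ρ_{l+1}(C,{t})`, `ρ_l(C,{t}) ≤ (1/2)·ρ_{l+2}(C,{t})`, and
consequently `∑_{l=1}^{L} ρ_{L-l}(C,{t}) ≤ 4·ρ_{L-1}(C,{t})`. -/
theorem walkCount_to_vertex_bounds {V : Type*} [Fintype V]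
    (G : V → V → Prop) (hsymm : ∀ i j, G i j → G j i) (hloop : ∀ i, G i i)
    (t : V) (C : Set V) (hC : ∀ i ∈ C, ∃ j, j ≠ i ∧ G i j) :
    (∀ l : ℕ, walkCount G C {t} l ≤ walkCount G C {t} (l + 1)) ∧
    (∀ l : ℕ, (walkCount G C {t} l : ℝ) ≤ (1 / 2) * (walkCount G C {t} (l + 2) : ℝ)) ∧
    (∀ L : ℕ, 1 ≤ L →
      ∑ l ∈ Finset.Icc 1 L, walkCount G C {t} (L - l)
        ≤ 4 * walkCount G C {t} (L - 1)) := by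
  have hmono := walkCount_le_walkCount_succ (C := C) (T := {t}) hloop
  have hdouble := two_mul_walkCount_le_walkCount_add_two (T := {t}) hsymm hloop hC
  refine ⟨hmono, fun l => ?_, fun L hL => ?_⟩
  · have : (2 * walkCount G C {t} l : ℝ) ≤ walkCount G C {t} (l + 2) := by
      exact_mod_cast hdouble l
    linarith
  · obtain ⟨n, rfl⟩ := Nat.exists_eq_add_of_le' hL
    rw [sum_Icc_sub_eq_sum_range, Nat.add_sub_cancel]
    exact sum_range_succ_le_four_mul (monotone_nat_of_le_succ hmono) hdouble n
end

section
/- Let the chain graph on vertices V = [n] have edges {i, i+1} for i ∈ [n-1] plus all self-loops. For any non-empty proper subset I ⊊ V, there exists an admissible subset C of the boundary C_I with |C| ≥ |C_I| / 2. -/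
variable {V : Type*}

/-- The neighborhood of a vertex. -/
def nbhd (G : V → V → Prop) (i : V) : Set V := {j | G i j}

/-- The neighborhood of a set of vertices. -/
def nbhdSet (G : V → V → Prop) (S : Set V) : Set V := ⋃ i ∈ S, nbhd G i

/-- `I` and `J` have no repeating shared neighbors: every shared neighbor has
exactly one neighbor in each of `I` and `J`. -/
def NoRepShared (G : V → V → Prop) (I J : Set V) : Prop :=
  ∀ k ∈ nbhdSet G I ∩ nbhdSet G J,
    (nbhd G k ∩ I).ncard = 1 ∧ (nbhd G k ∩ J).ncard = 1

/-- The boundary of the partition `(I, Iᶜ)`: vertices with an edge crossing it. -/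
def boundarySet (G : V → V → Prop) (I : Set V) : Set V :=
  {i ∈ I | (nbhd G i ∩ Iᶜ).Nonempty} ∪ {j ∈ Iᶜ | (nbhd G j ∩ I).Nonempty}

/-- `C` is an admissible subset of the boundary `C_I`. -/
def Admissible (G : V → V → Prop) (I C : Set V) : Prop :=
  C ⊆ boundarySet G I ∧
    ∃ I' J' : Set V, I' ⊆ I ∧ J' ⊆ Iᶜ ∧ NoRepShared G I' J' ∧
      C = nbhdSet G I' ∩ nbhdSet G J'

/-! Pick crossing edges `{q, q + 1}` of the chain greedily from the left, each more than two
steps after the previous one, so that every crossing edge starts within two steps after a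
picked one. Every boundary vertex then lies within `[q, q + 3]` for a picked `q`, so the boundary
has at most four vertices per picked edge. Taking `I'` and `J'` to be the endpoints of the picked
edges on either side, both endpoints of every picked edge lie in `N(I') ∩ N(J')`, giving two
vertices of `C` per picked edge; and the gap of at least three between picked edges is exactly
what rules out a shared neighbor with two neighbors on the same side. -/

section Graph

variable {G : V → V → Prop}

lemma mem_nbhdSet {S : Set V} {k : V} : k ∈ nbhdSet G S ↔ ∃ i ∈ S, G i k := by
  simp [nbhdSet, nbhd]

lemma nbhdSet_inter_subset_boundarySet (hG : ∀ i j, G i j → G j i) {I I' J' : Set V}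
    (hI' : I' ⊆ I) (hJ' : J' ⊆ Iᶜ) : nbhdSet G I' ∩ nbhdSet G J' ⊆ boundarySet G I := by
  rintro k ⟨hkI', hkJ'⟩
  obtain ⟨i, hi, hik⟩ := mem_nbhdSet.1 hkI'
  obtain ⟨j, hj, hjk⟩ := mem_nbhdSet.1 hkJ'
  by_cases hk : k ∈ I
  · exact Or.inl ⟨hk, j, hG j k hjk, hJ' hj⟩
  · exact Or.inr ⟨hk, i, hG i k hik, hI' hi⟩

lemma admissible_nbhdSet_inter (hG : ∀ i j, G i j → G j i) {I I' J' : Set V} (hI' : I' ⊆ I)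
    (hJ' : J' ⊆ Iᶜ) (h : NoRepShared G I' J') :
    Admissible G I (nbhdSet G I' ∩ nbhdSet G J') :=
  ⟨nbhdSet_inter_subset_boundarySet hG hI' hJ', I', J', hI', hJ', h, rfl⟩

end Graph

theorem Finset.exists_subset_separated_cover (S : Finset ℕ) (d : ℕ) :
    ∃ T ⊆ S, (T : Set ℕ).Pairwise (fun a b => a + d < b ∨ b + d < a) ∧
      ∀ p ∈ S, ∃ q ∈ T, q ≤ p ∧ p ≤ q + d := by
  classical
  induction S using Finset.strongInduction with
  | _ S ih =>
    obtain rfl | hS := S.eq_empty_or_nonempty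
    · exact ⟨∅, subset_rfl, by simp, by simp⟩
    set m := S.min' hS
    have hm : m ∈ S := S.min'_mem hS
    obtain ⟨T, hTS, hsep, hcov⟩ := ih (S.filter (m + d < ·))
      (Finset.filter_ssubset.2 ⟨m, hm, by omega⟩)
    have hT : ∀ q ∈ T, q ∈ S ∧ m + d < q := fun q hq => Finset.mem_filter.1 (hTS hq)
    refine ⟨insert m T, Finset.insert_subset hm fun q hq => (hT q hq).1, ?_, ?_⟩
    · rw [Finset.coe_insert, Set.pairwise_insert]
      exact ⟨hsep, fun q hq _ => ⟨Or.inl (hT q hq).2, Or.inr (hT q hq).2⟩⟩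
    · intro p hp
      by_cases hpm : m + d < p
      · obtain ⟨q, hq, hqp⟩ := hcov p (Finset.mem_filter.2 ⟨hp, hpm⟩)
        exact ⟨q, Finset.mem_insert_of_mem hq, hqp⟩
      · exact ⟨m, Finset.mem_insert_self m T, S.min'_le p hp, by omega⟩

namespace Chain

variable {n : ℕ}

def Adj (n : ℕ) (i j : Fin n) : Prop := i = j ∨ (i : ℕ) + 1 = j ∨ (j : ℕ) + 1 = i

lemma adj_iff {i j : Fin n} : Adj n i j ↔ (i : ℕ) ≤ j + 1 ∧ (j : ℕ) ≤ i + 1 := by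
  simp only [Adj, Fin.ext_iff]
  omega

lemma adj_symm {i j : Fin n} (h : Adj n i j) : Adj n j i := by
  rw [adj_iff] at h ⊢
  omega

def CrossesAt (X : Set (Fin n)) (q : ℕ) : Prop :=
  q + 1 < n ∧ ∀ v w : Fin n, (v : ℕ) = q → (w : ℕ) = q + 1 → (v ∈ X ↔ w ∉ X)

lemma crossesAt_compl {X : Set (Fin n)} {q : ℕ} : CrossesAt Xᶜ q ↔ CrossesAt X q := by
  simp only [CrossesAt, Set.mem_compl_iff, not_not]
  refine and_congr_right fun _ => forall₂_congr fun v w => ?_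
  exact imp_congr_right fun _ => imp_congr_right fun _ => by tauto

lemma exists_crossesAt_of_adj {X : Set (Fin n)} {v w : Fin n} (h : Adj n v w) (hv : v ∈ X)
    (hw : w ∉ X) : ∃ p, CrossesAt X p ∧ ((v : ℕ) = p ∨ (v : ℕ) = p + 1) := by
  rcases h with rfl | h | h
  · exact absurd hv hw
  · refine ⟨v, ⟨h ▸ w.isLt, fun x y hx hy => ?_⟩, Or.inl rfl⟩
    obtain rfl : x = v := Fin.ext hx
    obtain rfl : y = w := Fin.ext (by omega)
    tauto
  · refine ⟨w, ⟨h ▸ v.isLt, fun x y hx hy => ?_⟩, Or.inr h.symm⟩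
    obtain rfl : x = w := Fin.ext hx
    obtain rfl : y = v := Fin.ext (by omega)
    tauto

lemma exists_crossesAt_of_mem_boundarySet {I : Set (Fin n)} {v : Fin n}
    (hv : v ∈ boundarySet (Adj n) I) :
    ∃ p, CrossesAt I p ∧ ((v : ℕ) = p ∨ (v : ℕ) = p + 1) := by
  rcases hv with ⟨hvI, w, hvw, hwI⟩ | ⟨hvI, w, hvw, hwI⟩
  · exact exists_crossesAt_of_adj hvw hvI hwI
  · simpa only [crossesAt_compl] using exists_crossesAt_of_adj (X := Iᶜ) hvw hvI (by simpa)

lemma ncard_boundarySet_le {I : Set (Fin n)} {T : Finset ℕ}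
    (hcov : ∀ p, CrossesAt I p → ∃ q ∈ T, q ≤ p ∧ p ≤ q + 2) :
    (boundarySet (Adj n) I).ncard ≤ 4 * T.card := by
  classical
  have hsub : Fin.val '' boundarySet (Adj n) I ⊆ ↑(T.biUnion fun q => Finset.Icc q (q + 3)) := by
    rintro _ ⟨v, hv, rfl⟩
    obtain ⟨p, hp, hvp⟩ := exists_crossesAt_of_mem_boundarySet hv
    obtain ⟨q, hq, hqp⟩ := hcov p hp
    simp only [Finset.coe_biUnion, Finset.coe_Icc, Set.mem_iUnion, Set.mem_Icc]
    exact ⟨q, hq, by omega, by omega⟩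
  calc (boundarySet (Adj n) I).ncard
      = (Fin.val '' boundarySet (Adj n) I).ncard :=
        (Set.ncard_image_of_injective _ Fin.val_injective).symm
    _ ≤ (T.biUnion fun q => Finset.Icc q (q + 3)).card := by
        rw [← Set.ncard_coe_finset]
        exact Set.ncard_le_ncard hsub
    _ ≤ T.card * 4 := Finset.card_biUnion_le_card_mul _ _ _ fun q _ => by
        rw [Nat.card_Icc]; omega
    _ = 4 * T.card := mul_comm _ _

def endpoints (n : ℕ) (T : Finset ℕ) : Set (Fin n) :=
  {v | ∃ q ∈ T, (v : ℕ) = q ∨ (v : ℕ) = q + 1}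

section Endpoints

variable {T : Finset ℕ}

lemma two_mul_card_le_ncard_endpoints
    (hsep : (T : Set ℕ).Pairwise (fun a b => a + 2 < b ∨ b + 2 < a))
    (hT : ∀ q ∈ T, q + 1 < n) : 2 * T.card ≤ (endpoints n T).ncard := by
  classical
  have hdisj : (T : Set ℕ).PairwiseDisjoint fun q => ({q, q + 1} : Finset ℕ) :=
    fun a ha b hb hab => by
      have := hsep ha hb hab
      simp only [Function.onFun, Finset.disjoint_left, Finset.mem_insert, Finset.mem_singleton]
      omega
  have hsub : ↑(T.biUnion fun q => ({q, q + 1} : Finset ℕ)) ⊆ Fin.val '' endpoints n T := by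
    intro p hp
    simp only [Finset.coe_biUnion, Finset.coe_insert, Finset.coe_singleton, Set.mem_iUnion,
      Set.mem_insert_iff, Set.mem_singleton_iff, Finset.mem_coe] at hp
    obtain ⟨q, hq, hpq⟩ := hp
    have := hT q hq
    exact ⟨⟨p, by omega⟩, ⟨q, hq, hpq⟩, rfl⟩
  calc 2 * T.card = ∑ q ∈ T, ({q, q + 1} : Finset ℕ).card := by simp [mul_comm]
    _ = (T.biUnion fun q => ({q, q + 1} : Finset ℕ)).card := (Finset.card_biUnion hdisj).symm
    _ ≤ (Fin.val '' endpoints n T).ncard := by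
        rw [← Set.ncard_coe_finset]
        exact Set.ncard_le_ncard hsub
    _ = (endpoints n T).ncard := Set.ncard_image_of_injective _ Fin.val_injective

variable {X : Set (Fin n)}

lemma mem_nbhdSet_endpoints_inter (hcross : ∀ q ∈ T, CrossesAt X q) {v : Fin n}
    (hv : v ∈ endpoints n T) : v ∈ nbhdSet (Adj n) (endpoints n T ∩ X) := by
  obtain ⟨q, hq, hvq⟩ := hv
  obtain ⟨hqn, hqX⟩ := hcross q hq
  let x : Fin n := ⟨q, by omega⟩
  let y : Fin n := ⟨q + 1, hqn⟩
  have hx : x ∈ endpoints n T := ⟨q, hq, Or.inl rfl⟩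
  have hy : y ∈ endpoints n T := ⟨q, hq, Or.inr rfl⟩
  rw [mem_nbhdSet]
  by_cases hxX : x ∈ X
  · exact ⟨x, ⟨hx, hxX⟩, adj_iff.2 (by simp only [x]; omega)⟩
  · exact ⟨y, ⟨hy, not_not.1 (mt (hqX x y rfl rfl).2 hxX)⟩, adj_iff.2 (by simp only [y]; omega)⟩

lemma endpoints_subset_nbhdSet_inter (hcross : ∀ q ∈ T, CrossesAt X q) :
    endpoints n T ⊆ nbhdSet (Adj n) (endpoints n T ∩ X) ∩ nbhdSet (Adj n) (endpoints n T ∩ Xᶜ) :=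
  fun _ hv => ⟨mem_nbhdSet_endpoints_inter hcross hv,
    mem_nbhdSet_endpoints_inter (fun q hq => crossesAt_compl.2 (hcross q hq)) hv⟩

lemma eq_of_adj_of_mem_endpoints
    (hsep : (T : Set ℕ).Pairwise (fun a b => a + 2 < b ∨ b + 2 < a))
    (hcross : ∀ q ∈ T, CrossesAt X q) {a a' b k : Fin n}
    (ha : a ∈ endpoints n T ∩ X) (ha' : a' ∈ endpoints n T ∩ X) (hb : b ∈ endpoints n T ∩ Xᶜ)
    (hak : Adj n a k) (ha'k : Adj n a' k) (hbk : Adj n b k) : a = a' := by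
  obtain ⟨⟨q, hq, haq⟩, haX⟩ := ha
  obtain ⟨⟨q', hq', ha'q'⟩, ha'X⟩ := ha'
  obtain ⟨⟨r, hr, hbr⟩, hbX⟩ := hb
  rw [adj_iff] at hak ha'k hbk
  have hba : (b : ℕ) ≠ a := fun h => hbX (Fin.ext h ▸ haX)
  have hba' : (b : ℕ) ≠ a' := fun h => hbX (Fin.ext h ▸ ha'X)
  apply Fin.ext
  obtain rfl | hqq' := eq_or_ne q q'
  · have hX := (hcross q hq).2
    have : ¬((a : ℕ) = q ∧ (a' : ℕ) = q + 1) := fun ⟨h, h'⟩ => (hX a a' h h').1 haX ha'X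
    have : ¬((a' : ℕ) = q ∧ (a : ℕ) = q + 1) := fun ⟨h, h'⟩ => (hX a' a h h').1 ha'X haX
    omega
  · -- Then `a + 2 = a'` or `a' + 2 = a`, `k` is the vertex in between, and it is the only
    -- candidate for `b`, yet it is not an endpoint.
    have := hsep hq hq' hqq'
    have hrq := (eq_or_ne r q).imp_right (hsep hr hq)
    have hrq' := (eq_or_ne r q').imp_right (hsep hr hq')
    omega

lemma ncard_nbhd_inter_endpoints_eq_one
    (hsep : (T : Set ℕ).Pairwise (fun a b => a + 2 < b ∨ b + 2 < a))
    (hcross : ∀ q ∈ T, CrossesAt X q) {a b k : Fin n}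
    (ha : a ∈ endpoints n T ∩ X) (hb : b ∈ endpoints n T ∩ Xᶜ)
    (hak : Adj n a k) (hbk : Adj n b k) : (nbhd (Adj n) k ∩ (endpoints n T ∩ X)).ncard = 1 :=
  Set.ncard_eq_one.2 ⟨a, Set.eq_singleton_iff_unique_mem.2 ⟨⟨adj_symm hak, ha⟩,
    fun _ ⟨hkx, hx⟩ => eq_of_adj_of_mem_endpoints hsep hcross hx ha hb (adj_symm hkx) hak hbk⟩⟩

end Endpoints

lemma noRepShared_endpoints {I : Set (Fin n)} {T : Finset ℕ}
    (hsep : (T : Set ℕ).Pairwise (fun a b => a + 2 < b ∨ b + 2 < a))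
    (hcross : ∀ q ∈ T, CrossesAt I q) :
    NoRepShared (Adj n) (endpoints n T ∩ I) (endpoints n T ∩ Iᶜ) := by
  rintro k ⟨hkI, hkJ⟩
  obtain ⟨a, ha, hak⟩ := mem_nbhdSet.1 hkI
  obtain ⟨b, hb, hbk⟩ := mem_nbhdSet.1 hkJ
  refine ⟨ncard_nbhd_inter_endpoints_eq_one hsep hcross ha hb hak hbk, ?_⟩
  exact ncard_nbhd_inter_endpoints_eq_one hsep (fun q hq => crossesAt_compl.2 (hcross q hq))
    hb (by rwa [compl_compl]) hbk hak

end Chain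

open Chain

theorem chain_graph_admissible_half_general (n : ℕ) (I : Set (Fin n)) :
    ∃ C : Set (Fin n),
      Admissible (fun i j : Fin n => i = j ∨ (i : ℕ) + 1 = j ∨ (j : ℕ) + 1 = i) I C ∧
      (boundarySet (fun i j : Fin n => i = j ∨ (i : ℕ) + 1 = j ∨ (j : ℕ) + 1 = i) I).ncard
        ≤ 2 * C.ncard := by
  classical
  obtain ⟨T, hTS, hsep, hcov⟩ :=
    Finset.exists_subset_separated_cover ((Finset.range n).filter (CrossesAt I)) 2
  have hcross : ∀ q ∈ T, CrossesAt I q := fun q hq => (Finset.mem_filter.1 (hTS hq)).2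
  have hcov' : ∀ p, CrossesAt I p → ∃ q ∈ T, q ≤ p ∧ p ≤ q + 2 := fun p hp =>
    hcov p (Finset.mem_filter.2 ⟨Finset.mem_range.2 (by have := hp.1; omega), hp⟩)
  refine ⟨_, admissible_nbhdSet_inter (fun _ _ => adj_symm) Set.inter_subset_right
    Set.inter_subset_right (noRepShared_endpoints hsep hcross), ?_⟩
  have hcard := two_mul_card_le_ncard_endpoints hsep fun q hq => (hcross q hq).1
  calc (boundarySet (Adj n) I).ncard ≤ 4 * T.card := ncard_boundarySet_le hcov'
    _ ≤ 2 * (endpoints n T).ncard := by omega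
    _ ≤ 2 * _ := Nat.mul_le_mul_left 2 (Set.ncard_le_ncard (endpoints_subset_nbhdSet_inter hcross))

/-- In the chain graph on `Fin n` (with all self-loops), for any non-empty
proper subset `I`, there is an admissible subset `C` of the boundary `C_I`
with `|C| ≥ |C_I| / 2`. -/
theorem chain_graph_admissible_half (n : ℕ) (I : Set (Fin n))
    (hne : I.Nonempty) (hproper : I ≠ Set.univ) :
    ∃ C : Set (Fin n),
      Admissible (fun i j : Fin n => i = j ∨ (i : ℕ) + 1 = j ∨ (j : ℕ) + 1 = i) I C ∧
      (boundarySet (fun i j : Fin n => i = j ∨ (i : ℕ) + 1 = j ∨ (j : ℕ) + 1 = i) I).ncard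
        ≤ 2 * C.ncard :=
  chain_graph_admissible_half_general n I
end
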